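/- arXiv:1612.08888 — 3 statements merged into one kernel-verified Lean document; each statement's English description precedes it below -/
import Mathlib

section
/- Proposition (2×2 games, part a): Let Γ be a 2×2 bimatrix game. If Γ is degenerate for player I or degenerate for player II (i.e. not non-degenerate for that player), then both X^L ⊆ NE(X) and Y^L ⊆ NE(Y). -/
open Matrix

noncomputable section

/-- The set of mixed strategies: the standard simplex in `ℝ^m`. -/
def Simp (m : ℕ) : Set (Fin m → ℝ) := stdSimplex ℝ (Fin m)

/-- Bilinear payoff `xᵀ A y`. -/
def pay {m n : ℕ} (A : Matrix (Fin m) (Fin n) ℝ) (x : Fin m → ℝ) (y : Fin n → ℝ) : ℝ :=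
  x ⬝ᵥ A.mulVec y

/-- Payoff of a mixed strategy `x` against the pure strategy `j`: `α(x, e_j) = (xᵀA)_j`. -/
def purePay {m n : ℕ} (A : Matrix (Fin m) (Fin n) ℝ) (x : Fin m → ℝ) (j : Fin n) : ℝ :=
  Matrix.vecMul x A j

/-- Pure best replies of player II against `x`. -/
def BRII {m n : ℕ} (B : Matrix (Fin m) (Fin n) ℝ) (x : Fin m → ℝ) : Set (Fin n) :=
  {j | ∀ k, purePay B x k ≤ purePay B x j}

/-- Best-reply region `X(j)` of column `j`. -/
def XReg {m n : ℕ} (B : Matrix (Fin m) (Fin n) ℝ) (j : Fin n) : Set (Fin m → ℝ) :=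
  {x ∈ Simp m | j ∈ BRII B x}

/-- `D`: columns whose best-reply region has a fully mixed point. -/
def Dset {m n : ℕ} (B : Matrix (Fin m) (Fin n) ℝ) : Set (Fin n) :=
  {j | ∃ x ∈ XReg B j, ∀ i, 0 < x i}

/-- `E(j)`: columns of `B` payoff-equivalent to column `j`. -/
def Ecols {m n : ℕ} (B : Matrix (Fin m) (Fin n) ℝ) (j : Fin n) : Set (Fin n) :=
  {k | ∀ i, B i k = B i j}

/-- `min_j α(x, e_j)`. -/
def minPure {m n : ℕ} (A : Matrix (Fin m) (Fin n) ℝ) (x : Fin m → ℝ) : ℝ :=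
  sInf {w | ∃ j, w = purePay A x j}

/-- `max_j α(x, e_j)`. -/
def maxPure {m n : ℕ} (A : Matrix (Fin m) (Fin n) ℝ) (x : Fin m → ℝ) : ℝ :=
  sSup {w | ∃ j, w = purePay A x j}

/-- `max_{j ∈ BR_II(x)} α(x, e_j)`. -/
def maxBR {m n : ℕ} (A B : Matrix (Fin m) (Fin n) ℝ) (x : Fin m → ℝ) : ℝ :=
  sSup {w | ∃ j ∈ BRII B x, w = purePay A x j}

/-- Matrix game value `v_A = max_{x ∈ X} min_j α(x, e_j)`. -/
def matVal {m n : ℕ} (A : Matrix (Fin m) (Fin n) ℝ) : ℝ :=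
  sSup {v | ∃ x ∈ Simp m, v = minPure A x}

/-- `min_{k ∈ E(j)} α(x, e_k)`. -/
def minE {m n : ℕ} (A B : Matrix (Fin m) (Fin n) ℝ) (j : Fin n) (x : Fin m → ℝ) : ℝ :=
  sInf {w | ∃ k ∈ Ecols B j, w = purePay A x k}

/-- Commitment value `α^L = max_{j∈D} max_{x∈X(j)} min_{k∈E(j)} α(x,e_k)`. -/
def alphaL {m n : ℕ} (A B : Matrix (Fin m) (Fin n) ℝ) : ℝ :=
  sSup {v | ∃ j ∈ Dset B, ∃ x ∈ XReg B j, v = minE A B j x}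

/-- Highest leader payoff `α^H = max_{j : X(j)≠∅} max_{x∈X(j)} α(x,e_j)`. -/
def alphaH {m n : ℕ} (A B : Matrix (Fin m) (Fin n) ℝ) : ℝ :=
  sSup {v | ∃ j, ∃ x ∈ XReg B j, v = purePay A x j}

/-- Commitment optimal strategies of the leader (player I). -/
def XLset {m n : ℕ} (A B : Matrix (Fin m) (Fin n) ℝ) : Set (Fin m → ℝ) :=
  {x | ∃ j ∈ Dset B, x ∈ XReg B j ∧ minE A B j x = alphaL A B}

/-- Non-degeneracy for player I: no mixed strategy of player I has more pure best
replies (among player II's pure strategies) than the size of its support. -/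
def NondegFor {m n : ℕ} (B : Matrix (Fin m) (Fin n) ℝ) : Prop :=
  ∀ x ∈ Simp m, (BRII B x).ncard ≤ {i | x i ≠ 0}.ncard

/-- Nash equilibrium of the bimatrix game `(A,B)`. -/
def isNE {m n : ℕ} (A B : Matrix (Fin m) (Fin n) ℝ) (x : Fin m → ℝ) (y : Fin n → ℝ) : Prop :=
  x ∈ Simp m ∧ y ∈ Simp n ∧
  (∀ x' ∈ Simp m, pay A x' y ≤ pay A x y) ∧
  (∀ y' ∈ Simp n, pay B x y' ≤ pay B x y)

/-- Strategies of player I appearing in some Nash equilibrium. -/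
def NEX {m n : ℕ} (A B : Matrix (Fin m) (Fin n) ℝ) : Set (Fin m → ℝ) :=
  {x | ∃ y, isNE A B x y}

/-- Strategies of player II appearing in some Nash equilibrium. -/
def NEY {m n : ℕ} (A B : Matrix (Fin m) (Fin n) ℝ) : Set (Fin n → ℝ) :=
  {y | ∃ x, isNE A B x y}

/-- Weakly unilaterally competitive bimatrix game. -/
def WUC {m n : ℕ} (A B : Matrix (Fin m) (Fin n) ℝ) : Prop :=
  (∀ x₁ ∈ Simp m, ∀ x₂ ∈ Simp m, ∀ y ∈ Simp n,
    (pay A x₁ y > pay A x₂ y → pay B x₁ y ≤ pay B x₂ y) ∧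
    (pay A x₁ y = pay A x₂ y → pay B x₁ y = pay B x₂ y)) ∧
  (∀ y₁ ∈ Simp n, ∀ y₂ ∈ Simp n, ∀ x ∈ Simp m,
    (pay B x y₁ > pay B x y₂ → pay A x y₁ ≤ pay A x y₂) ∧
    (pay B x y₁ = pay B x y₂ → pay A x y₁ = pay A x y₂))

namespace Stmt15Aux

lemma fin2 (j : Fin 2) : j = 0 ∨ j = 1 := by omega

lemma fin2ne : ∀ (a b k : Fin 2), a ≠ b → k = a ∨ k = b := by decide

lemma mem_simp {x : Fin 2 → ℝ} : x ∈ Simp 2 ↔ 0 ≤ x 0 ∧ 0 ≤ x 1 ∧ x 0 + x 1 = 1 := by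
  unfold Simp stdSimplex
  constructor
  · rintro ⟨h1, h2⟩
    exact ⟨h1 0, h1 1, by simpa [Fin.sum_univ_two] using h2⟩
  · rintro ⟨h0, h1, hs⟩
    refine ⟨fun i => ?_, by simpa [Fin.sum_univ_two] using hs⟩
    rcases fin2 i with rfl | rfl <;> assumption

lemma purePay_eq (A : Matrix (Fin 2) (Fin 2) ℝ) (x : Fin 2 → ℝ) (j : Fin 2) :
    purePay A x j = x 0 * A 0 j + x 1 * A 1 j := by
  simp [purePay, Matrix.vecMul, dotProduct, Fin.sum_univ_two]

lemma pay_eq (A : Matrix (Fin 2) (Fin 2) ℝ) (x y : Fin 2 → ℝ) :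
    pay A x y = y 0 * purePay A x 0 + y 1 * purePay A x 1 := by
  simp [pay, purePay, Matrix.mulVec, Matrix.vecMul, dotProduct, Fin.sum_univ_two]
  ring

def e (j : Fin 2) : Fin 2 → ℝ := fun k => if k = j then 1 else 0

lemma e_mem (j : Fin 2) : e j ∈ Simp 2 := by
  rcases fin2 j with rfl | rfl <;> simp [mem_simp, e]

lemma pay_e (A : Matrix (Fin 2) (Fin 2) ℝ) (x : Fin 2 → ℝ) (j : Fin 2) :
    pay A x (e j) = purePay A x j := by
  rcases fin2 j with rfl | rfl <;> simp [pay_eq, e]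

lemma pp_e (A : Matrix (Fin 2) (Fin 2) ℝ) (i j : Fin 2) :
    purePay A (e i) j = A i j := by
  rcases fin2 i with rfl | rfl <;> simp [purePay_eq, e]

lemma pureNE {A B : Matrix (Fin 2) (Fin 2) ℝ} {x : Fin 2 → ℝ} {j : Fin 2}
    (hx : x ∈ Simp 2)
    (hBR : ∀ k, purePay B x k ≤ purePay B x j)
    (hmax : ∀ x' ∈ Simp 2, purePay A x' j ≤ purePay A x j) :
    x ∈ NEX A B := by
  refine ⟨e j, hx, e_mem j, ?_, ?_⟩
  · intro x' hx'
    rw [pay_e, pay_e]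
    exact hmax x' hx'
  · intro y' hy'
    rw [pay_e, pay_eq]
    rcases mem_simp.1 hy' with ⟨h0, h1, hs⟩
    have e1 := mul_le_mul_of_nonneg_left (hBR 0) h0
    have e2 := mul_le_mul_of_nonneg_left (hBR 1) h1
    have e3 : (y' 0 + y' 1) * purePay B x j = 1 * purePay B x j := by rw [hs]
    ring_nf at e3
    nlinarith [e1, e2, e3]

lemma Ecols_self (B : Matrix (Fin 2) (Fin 2) ℝ) (j : Fin 2) : j ∈ Ecols B j :=
  fun _ => rfl

lemma minE_le (A B : Matrix (Fin 2) (Fin 2) ℝ) (j : Fin 2) (x : Fin 2 → ℝ) :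
    minE A B j x ≤ purePay A x j := by
  apply csInf_le
  · refine ⟨min (purePay A x 0) (purePay A x 1), ?_⟩
    rintro w ⟨k, -, rfl⟩
    rcases fin2 k with rfl | rfl
    · exact min_le_left _ _
    · exact min_le_right _ _
  · exact ⟨j, Ecols_self B j, rfl⟩

lemma minE_eq_pp {B : Matrix (Fin 2) (Fin 2) ℝ}
    (hne : ¬ (B 0 0 = B 0 1 ∧ B 1 0 = B 1 1)) (A : Matrix (Fin 2) (Fin 2) ℝ)
    (j : Fin 2) (x : Fin 2 → ℝ) :
    minE A B j x = purePay A x j := by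
  have hset : {w | ∃ k ∈ Ecols B j, w = purePay A x k} = {purePay A x j} := by
    ext w
    simp only [Set.mem_setOf_eq, Set.mem_singleton_iff]
    constructor
    · rintro ⟨k, hk, rfl⟩
      rcases eq_or_ne k j with rfl | hkj
      · rfl
      · exfalso
        apply hne
        have hk' : ∀ i, B i k = B i j := hk
        rcases fin2 k with rfl | rfl <;> rcases fin2 j with rfl | rfl
        · exact absurd rfl hkj
        · exact ⟨hk' 0, hk' 1⟩
        · exact ⟨(hk' 0).symm, (hk' 1).symm⟩
        · exact absurd rfl hkj
    · rintro rfl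
      exact ⟨j, Ecols_self B j, rfl⟩
  rw [minE, hset, csInf_singleton]

lemma minE_eq_min {B : Matrix (Fin 2) (Fin 2) ℝ}
    (hB0 : B 0 0 = B 0 1) (hB1 : B 1 0 = B 1 1) (A : Matrix (Fin 2) (Fin 2) ℝ)
    (j : Fin 2) (x : Fin 2 → ℝ) :
    minE A B j x = min (purePay A x 0) (purePay A x 1) := by
  have hE : ∀ k : Fin 2, k ∈ Ecols B j := by
    intro k i
    rcases fin2 k with rfl | rfl <;> rcases fin2 j with rfl | rfl <;>
      rcases fin2 i with rfl | rfl <;> simp_all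
  have hset : {w | ∃ k ∈ Ecols B j, w = purePay A x k} =
      {purePay A x 0, purePay A x 1} := by
    ext w
    simp only [Set.mem_setOf_eq, Set.mem_insert_iff, Set.mem_singleton_iff]
    constructor
    · rintro ⟨k, -, rfl⟩
      rcases fin2 k with rfl | rfl
      · exact Or.inl rfl
      · exact Or.inr rfl
    · rintro (rfl | rfl)
      · exact ⟨0, hE 0, rfl⟩
      · exact ⟨1, hE 1, rfl⟩
  rw [minE, hset, csInf_pair]

lemma purePay_le_max {A : Matrix (Fin 2) (Fin 2) ℝ} {x : Fin 2 → ℝ}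
    (hx : x ∈ Simp 2) (j : Fin 2) :
    purePay A x j ≤ max (max (A 0 0) (A 0 1)) (max (A 1 0) (A 1 1)) := by
  rcases mem_simp.1 hx with ⟨h0, h1, hs⟩
  rw [purePay_eq]
  have hA0 : A 0 j ≤ max (max (A 0 0) (A 0 1)) (max (A 1 0) (A 1 1)) := by
    rcases fin2 j with rfl | rfl
    · exact le_max_of_le_left (le_max_left _ _)
    · exact le_max_of_le_left (le_max_right _ _)
  have hA1 : A 1 j ≤ max (max (A 0 0) (A 0 1)) (max (A 1 0) (A 1 1)) := by
    rcases fin2 j with rfl | rfl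
    · exact le_max_of_le_right (le_max_left _ _)
    · exact le_max_of_le_right (le_max_right _ _)
  have e1 := mul_le_mul_of_nonneg_left hA0 h0
  have e2 := mul_le_mul_of_nonneg_left hA1 h1
  have e3 : (x 0 + x 1) * (max (max (A 0 0) (A 0 1)) (max (A 1 0) (A 1 1)))
      = 1 * (max (max (A 0 0) (A 0 1)) (max (A 1 0) (A 1 1))) := by rw [hs]
  ring_nf at e3
  nlinarith [e1, e2, e3]

lemma bddAboveS (A B : Matrix (Fin 2) (Fin 2) ℝ) :
    BddAbove {v | ∃ j ∈ Dset B, ∃ x ∈ XReg B j, v = minE A B j x} := by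
  refine ⟨max (max (A 0 0) (A 0 1)) (max (A 1 0) (A 1 1)), ?_⟩
  rintro v ⟨j, -, x, hx, rfl⟩
  exact (minE_le A B j x).trans (purePay_le_max hx.1 j)

lemma half_mem : (fun _ : Fin 2 => (1:ℝ)/2) ∈ Simp 2 := by
  rw [mem_simp]; norm_num

lemma helper1 {A B : Matrix (Fin 2) (Fin 2) ℝ} (js j1 : Fin 2) (hne : js ≠ j1)
    (h1 : ∀ x ∈ Simp 2, purePay B x j1 ≤ purePay B x js)
    (h2 : ∀ x ∈ Simp 2, 0 < x 0 → 0 < x 1 → purePay B x j1 < purePay B x js) :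
    XLset A B ⊆ NEX A B := by
  have hcols : ¬ (B 0 0 = B 0 1 ∧ B 1 0 = B 1 1) := by
    rintro ⟨hc0, hc1⟩
    have hlt := h2 _ half_mem (by norm_num) (by norm_num)
    rw [purePay_eq, purePay_eq] at hlt
    rcases fin2 js with rfl | rfl <;> rcases fin2 j1 with rfl | rfl <;>
      (try rw [hc0, hc1] at hlt) <;> linarith
  have hD : ∀ j' ∈ Dset B, j' = js := by
    intro j' hj'
    obtain ⟨z, hz, hzpos⟩ := hj'
    by_contra hne'
    have hj1 : j' = j1 := by
      rcases fin2ne js j1 j' hne with h | h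
      · exact absurd h hne'
      · exact h
    subst hj1
    exact absurd (hz.2 js) (not_le.2 (h2 z hz.1 (hzpos 0) (hzpos 1)))
  rintro x ⟨j, hjD, hxr, heq⟩
  have hjs : j = js := hD j hjD
  rw [hjs] at hxr heq hjD
  refine pureNE (j := js) hxr.1 (fun k => ?_) (fun x' hx' => ?_)
  · rcases fin2ne js j1 k hne with rfl | rfl
    · exact le_rfl
    · exact h1 x hxr.1
  · have hx'r : x' ∈ XReg B js := by
      refine ⟨hx', fun k => ?_⟩
      rcases fin2ne js j1 k hne with rfl | rfl
      · exact le_rfl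
      · exact h1 x' hx'
    have hle : minE A B js x' ≤ minE A B js x := by
      rw [heq]
      exact le_csSup (bddAboveS A B) ⟨js, hjD, x', hx'r, rfl⟩
    rwa [minE_eq_pp hcols, minE_eq_pp hcols] at hle

lemma helperIgen {A B : Matrix (Fin 2) (Fin 2) ℝ}
    (hB0 : B 0 0 = B 0 1) (hB1 : B 1 0 = B 1 1)
    (k : Fin 2) (z : Fin 2 → ℝ) (hz : z ∈ Simp 2)
    (hup : ∀ x' ∈ Simp 2, purePay A x' k ≤ min (purePay A z 0) (purePay A z 1)) :
    XLset A B ⊆ NEX A B := by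
  have hqq : ∀ (x : Fin 2 → ℝ) (j : Fin 2), purePay B x j = x 0 * B 0 0 + x 1 * B 1 0 := by
    intro x j
    rcases fin2 j with rfl | rfl
    · rw [purePay_eq]
    · rw [purePay_eq, ← hB0, ← hB1]
  have hXR : ∀ x ∈ Simp 2, ∀ j, x ∈ XReg B j := by
    intro x hx j
    exact ⟨hx, fun k' => le_of_eq (by rw [hqq x k', hqq x j])⟩
  have h0D : (0 : Fin 2) ∈ Dset B :=
    ⟨fun _ => 1/2, hXR _ half_mem 0, fun i => by norm_num⟩
  rintro x ⟨j, hjD, hxr, heq⟩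
  have hle : minE A B 0 z ≤ minE A B j x := by
    rw [heq]
    exact le_csSup (bddAboveS A B) ⟨0, h0D, z, hXR z hz 0, rfl⟩
  rw [minE_eq_min hB0 hB1, minE_eq_min hB0 hB1] at hle
  refine pureNE (j := k) hxr.1 (fun k' => le_of_eq (by rw [hqq x k', hqq x k])) (fun x' hx' => ?_)
  calc purePay A x' k ≤ min (purePay A z 0) (purePay A z 1) := hup x' hx'
    _ ≤ min (purePay A x 0) (purePay A x 1) := hle
    _ ≤ purePay A x k := by
        rcases fin2 k with rfl | rfl
        · exact min_le_left _ _
        · exact min_le_right _ _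

lemma mixedNE {A B : Matrix (Fin 2) (Fin 2) ℝ} (hB0 : B 0 0 = B 0 1) (hB1 : B 1 0 = B 1 1)
    (q : ℝ) (hq0 : 0 ≤ q) (hq1 : q ≤ 1)
    (hkey : q * (A 0 0 - A 1 0) + (1 - q) * (A 0 1 - A 1 1) = 0) :
    XLset A B ⊆ NEX A B := by
  rintro x ⟨j, hjD, hxr, -⟩
  set y : Fin 2 → ℝ := fun i => if i = 0 then q else 1 - q with hy
  have hy0 : y 0 = q := rfl
  have hy1 : y 1 = 1 - q := rfl
  have hymem : y ∈ Simp 2 := by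
    rw [mem_simp, hy0, hy1]
    refine ⟨hq0, by linarith, by ring⟩
  have payconst : ∀ z ∈ Simp 2, pay A z y = q * A 1 0 + (1 - q) * A 1 1 := by
    intro z hz
    rcases mem_simp.1 hz with ⟨-, -, hzs⟩
    rw [pay_eq, hy0, hy1, purePay_eq, purePay_eq]
    linear_combination (z 0) * hkey + (q * A 1 0 + (1 - q) * A 1 1) * hzs
  have hqq : ∀ (w : Fin 2 → ℝ) (j' : Fin 2), purePay B w j' = w 0 * B 0 0 + w 1 * B 1 0 := by
    intro w j'
    rcases fin2 j' with rfl | rfl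
    · rw [purePay_eq]
    · rw [purePay_eq, ← hB0, ← hB1]
  have payBconst : ∀ w ∈ Simp 2, pay B x w = x 0 * B 0 0 + x 1 * B 1 0 := by
    intro w hw
    rcases mem_simp.1 hw with ⟨-, -, hws⟩
    rw [pay_eq, hqq x 0, hqq x 1]
    linear_combination (x 0 * B 0 0 + x 1 * B 1 0) * hws
  refine ⟨y, hxr.1, hymem, ?_, ?_⟩
  · intro x' hx'
    rw [payconst x' hx', payconst x hxr.1]
  · intro y' hy'
    rw [payBconst y' hy', payBconst y hymem]
lemma helperCross {A B : Matrix (Fin 2) (Fin 2) ℝ} (j0 j1 : Fin 2) (hj : j0 ≠ j1)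
    (hA : A 0 j0 = A 1 j0)
    (hcols : ¬ (B 0 0 = B 0 1 ∧ B 1 0 = B 1 1))
    (z : Fin 2 → ℝ) (hz : z ∈ Simp 2) (hz0 : 0 < z 0) (hz1 : 0 < z 1)
    (hzq : purePay B z j0 = purePay B z j1)
    (hρ0 : B 0 j1 - B 0 j0 - (B 1 j1 - B 1 j0) ≠ 0) :
    XLset A B ⊆ NEX A B := by
  have hminE := minE_eq_pp hcols A
  have hzall : ∀ m : Fin 2, purePay B z m = purePay B z j0 := by
    intro m
    rcases fin2ne j0 j1 m hj with h | h
    · rw [h]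
    · rw [h, hzq]
  have hzeq : ∀ k k' : Fin 2, purePay B z k ≤ purePay B z k' := by
    intro k k'
    rw [hzall k, hzall k']
  have hzr : ∀ j', z ∈ XReg B j' := fun j' => ⟨hz, fun k => hzeq k j'⟩
  have hzpos : ∀ i, 0 < z i := by
    intro i; rcases fin2 i with rfl | rfl <;> assumption
  have hj1D : j1 ∈ Dset B := ⟨z, hzr j1, hzpos⟩
  have hppj0 : ∀ x' ∈ Simp 2, purePay A x' j0 = A 0 j0 := by
    intro x' hx'
    rcases mem_simp.1 hx' with ⟨-, -, hs⟩
    rw [purePay_eq, ← hA]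
    linear_combination (A 0 j0) * hs
  rintro x ⟨j, hjD, hxr, heq⟩
  have hxS := hxr.1
  by_cases hxj0 : ∀ k, purePay B x k ≤ purePay B x j0
  · exact pureNE hxS hxj0 (fun x' hx' => by rw [hppj0 x' hx', hppj0 x hxS])
  · push_neg at hxj0
    obtain ⟨k, hk⟩ := hxj0
    have hstrict : purePay B x j0 < purePay B x j1 := by
      rcases fin2ne j0 j1 k hj with h | h
      · rw [h] at hk
        exact absurd hk (lt_irrefl _)
      · rw [h] at hk
        exact hk
    have hjj1 : j = j1 := by
      rcases fin2ne j0 j1 j hj with h | h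
      · exfalso
        have := hxr.2 j1
        rw [h] at this
        exact absurd this (not_le.2 hstrict)
      · exact h
    rw [hjj1] at hxr heq hjD
    refine pureNE (j := j1) hxS hxr.2 (fun x' hx' => ?_)
    by_cases hx'r : purePay B x' j0 ≤ purePay B x' j1
    · have hx'X : x' ∈ XReg B j1 := by
        refine ⟨hx', fun k' => ?_⟩
        rcases fin2ne j0 j1 k' hj with h | h
        · rw [h]
          exact hx'r
        · rw [h]
      have hle : minE A B j1 x' ≤ minE A B j1 x := by
        rw [heq]
        exact le_csSup (bddAboveS A B) ⟨j1, hjD, x', hx'X, rfl⟩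
      rwa [hminE, hminE] at hle
    · push_neg at hx'r
      have hzle : purePay A z j1 ≤ purePay A x j1 := by
        have hle : minE A B j1 z ≤ minE A B j1 x := by
          rw [heq]
          exact le_csSup (bddAboveS A B) ⟨j1, hjD, z, hzr j1, rfl⟩
        rwa [hminE, hminE] at hle
      rcases mem_simp.1 hxS with ⟨hx0, hx1, hxs⟩
      rcases mem_simp.1 hx' with ⟨hx'0, hx'1, hx's⟩
      rcases mem_simp.1 hz with ⟨-, -, hzs⟩
      rw [purePay_eq, purePay_eq] at hstrict hx'r hzq hzle ⊢
      have hx1e : x 1 = 1 - x 0 := by linarith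
      have hx'1e : x' 1 = 1 - x' 0 := by linarith
      have hz1e : z 1 = 1 - z 0 := by linarith
      rw [hx1e] at hstrict hzle ⊢
      rw [hx'1e] at hx'r ⊢
      rw [hz1e] at hzq hzle
      set ρ : ℝ := B 0 j1 - B 0 j0 - (B 1 j1 - B 1 j0) with hρdef
      have hd1 : 0 < (x 0 - z 0) * ρ := by rw [hρdef]; nlinarith [hstrict, hzq]
      have hd2 : (x' 0 - z 0) * ρ < 0 := by rw [hρdef]; nlinarith [hx'r, hzq]
      have hd3 : 0 ≤ (x 0 - z 0) * (A 0 j1 - A 1 j1) := by nlinarith [hzle]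
      have hgoal : 0 ≤ (x 0 - x' 0) * (A 0 j1 - A 1 j1) := by
        rcases lt_or_gt_of_ne hρ0 with hρn | hρp
        · have ha : x 0 - z 0 < 0 := by
            rcases mul_pos_iff.1 hd1 with ⟨h, h'⟩ | ⟨h, h'⟩
            · linarith
            · linarith
          have hb : 0 < x' 0 - z 0 := by
            rcases mul_neg_iff.1 hd2 with ⟨h, h'⟩ | ⟨h, h'⟩
            · linarith
            · linarith
          have hsn : A 0 j1 - A 1 j1 ≤ 0 := by
            by_contra hpos
            push_neg at hpos
            have := mul_neg_of_neg_of_pos ha hpos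
            linarith
          have hxx : x 0 - x' 0 ≤ 0 := by linarith
          calc (0:ℝ) = 0 * (A 0 j1 - A 1 j1) := by ring
            _ ≤ (x 0 - x' 0) * (A 0 j1 - A 1 j1) := by
                exact mul_le_mul_of_nonpos_right (by linarith) hsn
        · have ha : 0 < x 0 - z 0 := by
            rcases mul_pos_iff.1 hd1 with ⟨h, h'⟩ | ⟨h, h'⟩
            · linarith
            · linarith
          have hb : x' 0 - z 0 < 0 := by
            rcases mul_neg_iff.1 hd2 with ⟨h, h'⟩ | ⟨h, h'⟩
            · linarith
            · linarith
          have hsn : 0 ≤ A 0 j1 - A 1 j1 := by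
            by_contra hneg
            push_neg at hneg
            have := mul_neg_of_pos_of_neg ha hneg
            linarith
          exact mul_nonneg (by linarith) hsn
      linarith [hgoal]

lemma caseI {A B : Matrix (Fin 2) (Fin 2) ℝ}
    (hB0 : B 0 0 = B 0 1) (hB1 : B 1 0 = B 1 1) :
    XLset A B ⊆ NEX A B := by
  rcases le_or_gt (A 1 0) (A 0 0) with h00 | h00 <;>
    rcases le_or_gt (A 1 1) (A 0 1) with h01 | h01
  · -- s0 ≥ 0, s1 ≥ 0 : pure vertex e 0
    rcases le_total (A 0 0) (A 0 1) with hmin | hmin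
    · refine helperIgen hB0 hB1 0 (e 0) (e_mem 0) (fun x' hx' => ?_)
      rcases mem_simp.1 hx' with ⟨h0, h1, hs⟩
      rw [pp_e, pp_e, purePay_eq]
      have e1 := mul_le_mul_of_nonneg_left h00 h1
      have e3 : (x' 0 + x' 1) * A 0 0 = 1 * A 0 0 := by rw [hs]
      ring_nf at e3
      exact le_min (by nlinarith) (by nlinarith)
    · refine helperIgen hB0 hB1 1 (e 0) (e_mem 0) (fun x' hx' => ?_)
      rcases mem_simp.1 hx' with ⟨h0, h1, hs⟩
      rw [pp_e, pp_e, purePay_eq]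
      have e1 := mul_le_mul_of_nonneg_left h01 h1
      have e3 : (x' 0 + x' 1) * A 0 1 = 1 * A 0 1 := by rw [hs]
      ring_nf at e3
      exact le_min (by nlinarith) (by nlinarith)
  · -- s0 ≥ 0, s1 < 0 : mixed
    have hden : (0:ℝ) < A 0 0 - A 1 0 - (A 0 1 - A 1 1) := by linarith
    have hne : A 0 0 - A 1 0 - (A 0 1 - A 1 1) ≠ 0 := ne_of_gt hden
    refine mixedNE hB0 hB1 ((A 1 1 - A 0 1) / (A 0 0 - A 1 0 - (A 0 1 - A 1 1)))
      (div_nonneg (by linarith) (by linarith)) ?_ ?_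
    · rw [div_le_one hden]; linarith
    · field_simp
      ring
  · -- s0 < 0, s1 ≥ 0 : mixed
    have hden : A 0 0 - A 1 0 - (A 0 1 - A 1 1) < 0 := by linarith
    have hne : A 0 0 - A 1 0 - (A 0 1 - A 1 1) ≠ 0 := ne_of_lt hden
    refine mixedNE hB0 hB1 ((A 1 1 - A 0 1) / (A 0 0 - A 1 0 - (A 0 1 - A 1 1)))
      (div_nonneg_iff.2 (Or.inr ⟨by linarith, by linarith⟩)) ?_ ?_
    · rw [div_le_one_iff]
      exact Or.inr (Or.inr ⟨hden, by linarith⟩)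
    · field_simp
      ring
  · -- s0 < 0, s1 < 0 : pure vertex e 1
    rcases le_total (A 1 0) (A 1 1) with hmin | hmin
    · refine helperIgen hB0 hB1 0 (e 1) (e_mem 1) (fun x' hx' => ?_)
      rcases mem_simp.1 hx' with ⟨h0, h1, hs⟩
      rw [pp_e, pp_e, purePay_eq]
      have e1 := mul_le_mul_of_nonneg_left h00.le h0
      have e3 : (x' 0 + x' 1) * A 1 0 = 1 * A 1 0 := by rw [hs]
      ring_nf at e3
      exact le_min (by nlinarith) (by nlinarith)
    · refine helperIgen hB0 hB1 1 (e 1) (e_mem 1) (fun x' hx' => ?_)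
      rcases mem_simp.1 hx' with ⟨h0, h1, hs⟩
      rw [pp_e, pp_e, purePay_eq]
      have e1 := mul_le_mul_of_nonneg_left h01.le h0
      have e3 : (x' 0 + x' 1) * A 1 1 = 1 * A 1 1 := by rw [hs]
      ring_nf at e3
      exact le_min (by nlinarith) (by nlinarith)
lemma mainI {A B : Matrix (Fin 2) (Fin 2) ℝ}
    (hdeg : (∃ i, B i 0 = B i 1) ∨ (∃ j, A 0 j = A 1 j)) :
    XLset A B ⊆ NEX A B := by
  by_cases hBeq : B 0 0 = B 0 1 ∧ B 1 0 = B 1 1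
  · exact caseI hBeq.1 hBeq.2
  · have hor : B 0 0 ≠ B 0 1 ∨ B 1 0 ≠ B 1 1 := by
      by_contra h
      push_neg at h
      exact hBeq ⟨h.1, h.2⟩
    rcases le_or_gt (B 0 1) (B 0 0) with hu | hu <;>
      rcases le_or_gt (B 1 1) (B 1 0) with hv | hv
    · -- u ≥ 0, v ≥ 0, not both zero: column 0 dominant
      refine helper1 0 1 (by decide) ?_ ?_
      · intro x hx
        rcases mem_simp.1 hx with ⟨h0, h1, hs⟩
        rw [purePay_eq, purePay_eq]
        have e1 := mul_le_mul_of_nonneg_left hu h0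
        have e2 := mul_le_mul_of_nonneg_left hv h1
        linarith
      · intro x hx h0 h1
        rw [purePay_eq, purePay_eq]
        rcases hor with hne | hne
        · have hlt : B 0 1 < B 0 0 := hu.lt_of_ne (Ne.symm hne)
          have e1 := mul_lt_mul_of_pos_left hlt h0
          have e2 := mul_le_mul_of_nonneg_left hv h1.le
          linarith
        · have hlt : B 1 1 < B 1 0 := hv.lt_of_ne (Ne.symm hne)
          have e1 := mul_le_mul_of_nonneg_left hu h0.le
          have e2 := mul_lt_mul_of_pos_left hlt h1
          linarith
    · -- u ≥ 0, v < 0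
      by_cases hu0 : B 0 0 = B 0 1
      · -- u = 0 : column 1 dominant
        refine helper1 1 0 (by decide) ?_ ?_
        · intro x hx
          rcases mem_simp.1 hx with ⟨h0, h1, hs⟩
          rw [purePay_eq, purePay_eq]
          have e2 := mul_le_mul_of_nonneg_left hv.le h1
          have e1 : x 0 * B 0 0 = x 0 * B 0 1 := by rw [hu0]
          linarith
        · intro x hx h0 h1
          rw [purePay_eq, purePay_eq]
          have e2 := mul_lt_mul_of_pos_left hv h1
          have e1 : x 0 * B 0 0 = x 0 * B 0 1 := by rw [hu0]
          linarith
      · -- u > 0 > v : crossing case, A must be degenerate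
        have hu' : B 0 1 < B 0 0 := hu.lt_of_ne (Ne.symm hu0)
        have hAdeg : ∃ j, A 0 j = A 1 j := by
          rcases hdeg with ⟨i, hi⟩ | h
          · exfalso
            rcases fin2 i with rfl | rfl
            · exact hu0 hi
            · linarith [hi]
          · exact h
        obtain ⟨j0, hA⟩ := hAdeg
        have hD : (0:ℝ) < B 0 0 - B 0 1 + (B 1 1 - B 1 0) := by linarith
        have hDne : (B 0 0 - B 0 1 + (B 1 1 - B 1 0)) ≠ 0 := ne_of_gt hD
        set z : Fin 2 → ℝ := fun i => if i = 0
          then (B 1 1 - B 1 0) / (B 0 0 - B 0 1 + (B 1 1 - B 1 0))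
          else (B 0 0 - B 0 1) / (B 0 0 - B 0 1 + (B 1 1 - B 1 0)) with hzdef
        have hz0v : z 0 = (B 1 1 - B 1 0) / (B 0 0 - B 0 1 + (B 1 1 - B 1 0)) := rfl
        have hz1v : z 1 = (B 0 0 - B 0 1) / (B 0 0 - B 0 1 + (B 1 1 - B 1 0)) := rfl
        have hz0 : 0 < z 0 := by
          rw [hz0v]; exact div_pos (by linarith) hD
        have hz1 : 0 < z 1 := by
          rw [hz1v]; exact div_pos (by linarith) hD
        have hzS : z ∈ Simp 2 :=
          mem_simp.2 ⟨hz0.le, hz1.le, by rw [hz0v, hz1v]; field_simp; ring⟩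
        have hzq : purePay B z 0 = purePay B z 1 := by
          rw [purePay_eq, purePay_eq, hz0v, hz1v]
          field_simp
          ring
        rcases fin2 j0 with rfl | rfl
        · refine helperCross 0 1 (by decide) hA hBeq z hzS hz0 hz1 hzq ?_
          intro hc
          apply hDne
          linarith
        · refine helperCross 1 0 (by decide) hA hBeq z hzS hz0 hz1 hzq.symm ?_
          intro hc
          apply hDne
          linarith
    · -- u < 0, v ≥ 0
      by_cases hv0 : B 1 0 = B 1 1
      · -- v = 0 : column 1 dominant
        refine helper1 1 0 (by decide) ?_ ?_
        · intro x hx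
          rcases mem_simp.1 hx with ⟨h0, h1, hs⟩
          rw [purePay_eq, purePay_eq]
          have e1 := mul_le_mul_of_nonneg_left hu.le h0
          have e2 : x 1 * B 1 0 = x 1 * B 1 1 := by rw [hv0]
          linarith
        · intro x hx h0 h1
          rw [purePay_eq, purePay_eq]
          have e1 := mul_lt_mul_of_pos_left hu h0
          have e2 : x 1 * B 1 0 = x 1 * B 1 1 := by rw [hv0]
          linarith
      · -- v > 0 > u : crossing case
        have hv' : B 1 1 < B 1 0 := hv.lt_of_ne (Ne.symm hv0)
        have hAdeg : ∃ j, A 0 j = A 1 j := by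
          rcases hdeg with ⟨i, hi⟩ | h
          · exfalso
            rcases fin2 i with rfl | rfl
            · linarith [hi]
            · exact hv0 hi
          · exact h
        obtain ⟨j0, hA⟩ := hAdeg
        have hD : (0:ℝ) < B 0 1 - B 0 0 + (B 1 0 - B 1 1) := by linarith
        have hDne : (B 0 1 - B 0 0 + (B 1 0 - B 1 1)) ≠ 0 := ne_of_gt hD
        set z : Fin 2 → ℝ := fun i => if i = 0
          then (B 1 0 - B 1 1) / (B 0 1 - B 0 0 + (B 1 0 - B 1 1))
          else (B 0 1 - B 0 0) / (B 0 1 - B 0 0 + (B 1 0 - B 1 1)) with hzdef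
        have hz0v : z 0 = (B 1 0 - B 1 1) / (B 0 1 - B 0 0 + (B 1 0 - B 1 1)) := rfl
        have hz1v : z 1 = (B 0 1 - B 0 0) / (B 0 1 - B 0 0 + (B 1 0 - B 1 1)) := rfl
        have hz0 : 0 < z 0 := by
          rw [hz0v]; exact div_pos (by linarith) hD
        have hz1 : 0 < z 1 := by
          rw [hz1v]; exact div_pos (by linarith) hD
        have hzS : z ∈ Simp 2 :=
          mem_simp.2 ⟨hz0.le, hz1.le, by rw [hz0v, hz1v]; field_simp; ring⟩
        have hzq : purePay B z 0 = purePay B z 1 := by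
          rw [purePay_eq, purePay_eq, hz0v, hz1v]
          field_simp
          ring
        rcases fin2 j0 with rfl | rfl
        · refine helperCross 0 1 (by decide) hA hBeq z hzS hz0 hz1 hzq ?_
          intro hc
          apply hDne
          linarith
        · refine helperCross 1 0 (by decide) hA hBeq z hzS hz0 hz1 hzq.symm ?_
          intro hc
          apply hDne
          linarith
    · -- u < 0, v < 0 : column 1 dominant
      refine helper1 1 0 (by decide) ?_ ?_
      · intro x hx
        rcases mem_simp.1 hx with ⟨h0, h1, hs⟩
        rw [purePay_eq, purePay_eq]
        have e1 := mul_le_mul_of_nonneg_left hu.le h0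
        have e2 := mul_le_mul_of_nonneg_left hv.le h1
        linarith
      · intro x hx h0 h1
        rw [purePay_eq, purePay_eq]
        have e1 := mul_lt_mul_of_pos_left hu h0
        have e2 := mul_lt_mul_of_pos_left hv h1
        linarith
lemma nondeg_char {B : Matrix (Fin 2) (Fin 2) ℝ} (h : ¬ NondegFor B) :
    ∃ i, B i 0 = B i 1 := by
  by_contra hB
  push_neg at hB
  apply h
  intro x hx
  rcases mem_simp.1 hx with ⟨hx0, hx1, hxs⟩
  by_cases h0 : x 0 = 0
  · have hx1' : x 1 = 1 := by linarith
    have hsupp : {i | x i ≠ 0} = {1} := by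
      ext i
      rcases fin2 i with rfl | rfl <;> simp [h0, hx1']
    have hne : purePay B x 0 ≠ purePay B x 1 := by
      rw [purePay_eq, purePay_eq, h0, hx1']
      simpa using hB 1
    have hsub : BRII B x ⊆ {0} ∨ BRII B x ⊆ {1} := by
      by_cases hb0 : (0 : Fin 2) ∈ BRII B x
      · left
        intro k hk
        rcases fin2 k with rfl | rfl
        · rfl
        · exact absurd (le_antisymm (hk 0) (hb0 1)) hne
      · right
        intro k hk
        rcases fin2 k with rfl | rfl
        · exact absurd hk hb0
        · rfl
    rw [hsupp, Set.ncard_singleton]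
    rcases hsub with hs' | hs'
    · exact (Set.ncard_le_ncard hs' (Set.finite_singleton _)).trans
        (by rw [Set.ncard_singleton])
    · exact (Set.ncard_le_ncard hs' (Set.finite_singleton _)).trans
        (by rw [Set.ncard_singleton])
  · by_cases h1 : x 1 = 0
    · have hx0' : x 0 = 1 := by linarith
      have hsupp : {i | x i ≠ 0} = {0} := by
        ext i
        rcases fin2 i with rfl | rfl <;> simp [h1, hx0']
      have hne : purePay B x 0 ≠ purePay B x 1 := by
        rw [purePay_eq, purePay_eq, h1, hx0']
        simpa using hB 0
      have hsub : BRII B x ⊆ {0} ∨ BRII B x ⊆ {1} := by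
        by_cases hb0 : (0 : Fin 2) ∈ BRII B x
        · left
          intro k hk
          rcases fin2 k with rfl | rfl
          · rfl
          · exact absurd (le_antisymm (hk 0) (hb0 1)) hne
        · right
          intro k hk
          rcases fin2 k with rfl | rfl
          · exact absurd hk hb0
          · rfl
      rw [hsupp, Set.ncard_singleton]
      rcases hsub with hs' | hs'
      · exact (Set.ncard_le_ncard hs' (Set.finite_singleton _)).trans
          (by rw [Set.ncard_singleton])
      · exact (Set.ncard_le_ncard hs' (Set.finite_singleton _)).trans
          (by rw [Set.ncard_singleton])
    · have hsupp : {i | x i ≠ 0} = Set.univ := by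
        ext i
        rcases fin2 i with rfl | rfl <;> simp [h0, h1]
      rw [hsupp]
      exact Set.ncard_le_ncard (Set.subset_univ _) Set.finite_univ

lemma pay_tr (M : Matrix (Fin 2) (Fin 2) ℝ) (a b : Fin 2 → ℝ) :
    pay Mᵀ a b = pay M b a := by
  simp [pay, Matrix.mulVec, Matrix.vecMul, dotProduct, Fin.sum_univ_two,
    Matrix.transpose_apply]
  ring

lemma isNE_tr {A B : Matrix (Fin 2) (Fin 2) ℝ} {x y : Fin 2 → ℝ} :
    isNE Bᵀ Aᵀ y x ↔ isNE A B x y := by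
  constructor
  · rintro ⟨h1, h2, h3, h4⟩
    refine ⟨h2, h1, fun x' hx' => ?_, fun y' hy' => ?_⟩
    · have := h4 x' hx'
      rwa [pay_tr, pay_tr] at this
    · have := h3 y' hy'
      rwa [pay_tr, pay_tr] at this
  · rintro ⟨h1, h2, h3, h4⟩
    refine ⟨h2, h1, fun y' hy' => ?_, fun x' hx' => ?_⟩
    · rw [pay_tr, pay_tr]
      exact h4 y' hy'
    · rw [pay_tr, pay_tr]
      exact h3 x' hx'

end Stmt15Aux
/-- in a 2×2 bimatrix game, if the game is degenerate for player I or
degenerate for player II, then `X^L ⊆ NE(X)` and `Y^L ⊆ NE(Y)` (the quantities for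
player II as leader are those of the game with matrices `(Bᵀ, Aᵀ)`). -/
theorem stmt15 (A B : Matrix (Fin 2) (Fin 2) ℝ)
    (hdeg : ¬ NondegFor B ∨ ¬ NondegFor Aᵀ) :
    XLset A B ⊆ NEX A B ∧ XLset Bᵀ Aᵀ ⊆ NEY A B := by
  have hd1 : (∃ i, B i 0 = B i 1) ∨ (∃ j, A 0 j = A 1 j) := by
    rcases hdeg with h | h
    · exact Or.inl (Stmt15Aux.nondeg_char h)
    · obtain ⟨i, hi⟩ := Stmt15Aux.nondeg_char h
      exact Or.inr ⟨i, hi⟩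
  refine ⟨Stmt15Aux.mainI hd1, ?_⟩
  intro y hy
  have hd2 : (∃ i, Aᵀ i 0 = Aᵀ i 1) ∨ (∃ j, Bᵀ 0 j = Bᵀ 1 j) := by
    rcases hd1 with ⟨i, hi⟩ | ⟨j, hj⟩
    · exact Or.inr ⟨i, hi⟩
    · exact Or.inl ⟨j, hj⟩
  obtain ⟨x', hNE⟩ := Stmt15Aux.mainI hd2 hy
  exact ⟨x', Stmt15Aux.isNE_tr.1 hNE⟩
end
end

section
/- Proposition (2×2 games, part b): Let Γ be a 2×2 bimatrix game that is non-degenerate for player I and non-degenerate for player II. Then exactly one of the following alternatives holds: (i) there exists x^L ∈ X^L with x^L ∉ NE(X), and Y^L = NE(Y); or (ii) there exists y^L ∈ Y^L with y^L ∉ NE(Y), and X^L = NE(X); or (iii) X^L ⊆ NE(X) and Y^L ⊆ NE(Y). -/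
open Matrix

noncomputable section

/-!
Non-degeneracy says that no row of `B` and no column of `A` contains a tie. Everything follows
from the dichotomy `X^L ⊆ NE(X)` or `Y^L = NE(Y)`, applied to the game and to its transpose.

If player I has a strictly dominant row `i`, then both the equilibria and the commitment
optimal strategies of player II reduce to the pure best reply `e_j` to `i`, so `Y^L = NE(Y)`.
Otherwise take `x^L ∈ X^L` with column `j`: it maximises the linear function `α(·, e_j)` on the
segment `X(j)`, which starts at a pure row `e_i` answered strictly by `j`. Either the maximum is
at a pure row, which then supports a pure equilibrium, or it is the point where player II is
indifferent; then, since no row dominates, some `y` makes player I indifferent as well and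
`(x^L, y)` is a mixed equilibrium.
-/

open Finset

section General

variable {m n : ℕ}

lemma dotProduct_le_of_mem_Simp {x v : Fin m → ℝ} {c : ℝ} (hx : x ∈ Simp m)
    (hv : ∀ i, v i ≤ c) : x ⬝ᵥ v ≤ c :=
  calc x ⬝ᵥ v = ∑ i, x i * v i := rfl
    _ ≤ ∑ i, x i * c := sum_le_sum fun i _ => mul_le_mul_of_nonneg_left (hv i) (hx.1 i)
    _ = c := by rw [← sum_mul, hx.2, one_mul]

lemma dotProduct_eq_of_mem_Simp {x v : Fin m → ℝ} {c : ℝ} (hx : x ∈ Simp m)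
    (hv : ∀ i, v i = c) : x ⬝ᵥ v = c := by
  simp only [dotProduct, hv, ← sum_mul, hx.2, one_mul]

lemma dotProduct_lt_dotProduct_of_mem_Simp {x v w : Fin m → ℝ} (hx : x ∈ Simp m)
    (hvw : ∀ i, v i < w i) : x ⬝ᵥ v < x ⬝ᵥ w := by
  obtain ⟨i, hi⟩ : ∃ i, 0 < x i := by
    by_contra! h
    have h0 : ∑ i, x i = 0 := sum_eq_zero fun i _ => le_antisymm (h i) (hx.1 i)
    exact one_ne_zero (hx.2.symm.trans h0)
  exact sum_lt_sum (fun k _ => mul_le_mul_of_nonneg_left (hvw k).le (hx.1 k))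
    ⟨i, mem_univ i, mul_lt_mul_of_pos_left (hvw i) hi⟩

lemma purePay_single (M : Matrix (Fin m) (Fin n) ℝ) (i : Fin m) (j : Fin n) :
    purePay M (Pi.single i 1) j = M i j := by
  simp [purePay]

lemma pay_eq_dotProduct_purePay (M : Matrix (Fin m) (Fin n) ℝ) (x : Fin m → ℝ)
    (y : Fin n → ℝ) : pay M x y = y ⬝ᵥ purePay M x := by
  rw [pay, dotProduct_mulVec, dotProduct_comm]; rfl

lemma pay_transpose (M : Matrix (Fin m) (Fin n) ℝ) (x : Fin m → ℝ) (y : Fin n → ℝ) :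
    pay Mᵀ y x = pay M x y := by
  rw [pay, pay, dotProduct_mulVec, vecMul_transpose, dotProduct_comm]

variable {A B : Matrix (Fin m) (Fin n) ℝ}

lemma isNE_transpose_iff {x : Fin m → ℝ} {y : Fin n → ℝ} :
    isNE Bᵀ Aᵀ y x ↔ isNE A B x y := by
  simp only [isNE, pay_transpose]
  tauto

lemma NEX_transpose : NEX Bᵀ Aᵀ = NEY A B := by
  ext; simp only [NEX, NEY, Set.mem_ofPred_eq, isNE_transpose_iff]

lemma NEY_transpose : NEY Bᵀ Aᵀ = NEX A B := by
  ext; simp only [NEX, NEY, Set.mem_ofPred_eq, isNE_transpose_iff]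

lemma isNE_iff_pure {x : Fin m → ℝ} {y : Fin n → ℝ} :
    isNE A B x y ↔ x ∈ Simp m ∧ y ∈ Simp n ∧
      (∀ i, (A *ᵥ y) i ≤ pay A x y) ∧ (∀ j, purePay B x j ≤ pay B x y) := by
  refine and_congr_right fun _ => and_congr_right fun _ => and_congr ?_ ?_
  · refine ⟨fun h i => ?_, fun h x' hx' => dotProduct_le_of_mem_Simp hx' h⟩
    simpa [pay] using h _ (single_mem_stdSimplex ℝ i)
  · simp only [pay_eq_dotProduct_purePay]
    refine ⟨fun h j => ?_, fun h y' hy' => dotProduct_le_of_mem_Simp hy' h⟩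
    simpa using h _ (single_mem_stdSimplex ℝ j)

lemma isNE_single {i : Fin m} {j : Fin n} (hA : ∀ k, A k j ≤ A i j)
    (hB : ∀ l, B i l ≤ B i j) : isNE A B (Pi.single i 1) (Pi.single j 1) := by
  refine isNE_iff_pure.2 ⟨single_mem_stdSimplex ℝ i, single_mem_stdSimplex ℝ j,
    fun k => ?_, fun l => ?_⟩
  · simpa [pay] using hA k
  · simpa [pay_eq_dotProduct_purePay, purePay_single] using hB l

lemma isNE_of_indifferent {x : Fin m → ℝ} {y : Fin n → ℝ} {a b : ℝ} (hx : x ∈ Simp m)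
    (hy : y ∈ Simp n) (hA : ∀ i, (A *ᵥ y) i = a) (hB : ∀ j, purePay B x j = b) :
    isNE A B x y := by
  have hpayA : pay A x y = a := dotProduct_eq_of_mem_Simp hx hA
  have hpayB : pay B x y = b := by
    rw [pay_eq_dotProduct_purePay]; exact dotProduct_eq_of_mem_Simp hy hB
  exact isNE_iff_pure.2 ⟨hx, hy, fun i => by rw [hA, hpayA], fun j => by rw [hB, hpayB]⟩

lemma Ecols_eq_singleton {j : Fin n} (h : ∀ k ≠ j, ∃ i, B i k ≠ B i j) :
    Ecols B j = {j} := by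
  ext k
  refine ⟨fun hk => ?_, fun hk => hk ▸ fun _ => rfl⟩
  by_contra hkj
  obtain ⟨i, hi⟩ := h k hkj
  exact hi (hk i)

lemma minE_eq_purePay {j : Fin n} (hE : Ecols B j = {j}) (x : Fin m → ℝ) :
    minE A B j x = purePay A x j := by
  simp [minE, hE]

lemma minE_le_purePay (j : Fin n) (x : Fin m → ℝ) : minE A B j x ≤ purePay A x j := by
  have hfin : {w | ∃ k ∈ Ecols B j, w = purePay A x k}.Finite :=
    (Set.finite_range (purePay A x)).subset fun _ ⟨k, _, hw⟩ => ⟨k, hw.symm⟩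
  exact csInf_le hfin.bddBelow ⟨j, fun _ => rfl, rfl⟩

lemma minE_le_alphaL {j : Fin n} {x : Fin m → ℝ} (hj : j ∈ Dset B) (hx : x ∈ XReg B j) :
    minE A B j x ≤ alphaL A B := by
  refine le_csSup ⟨∑ i, ∑ k, |A i k|, ?_⟩ ⟨j, hj, x, hx, rfl⟩
  rintro _ ⟨j, -, x, hx, rfl⟩
  refine (minE_le_purePay j x).trans (dotProduct_le_of_mem_Simp hx.1 fun i => ?_)
  calc A i j ≤ |A i j| := le_abs_self _
    _ ≤ ∑ k, |A i k| := single_le_sum (fun k _ => abs_nonneg (A i k)) (mem_univ j)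
    _ ≤ ∑ i, ∑ k, |A i k| :=
      single_le_sum (f := fun i => ∑ k, |A i k|)
        (fun i _ => sum_nonneg fun k _ => abs_nonneg (A i k)) (mem_univ i)

lemma exists_forall_purePay_le_of_mem_XLset (hE : ∀ j, Ecols B j = {j}) {xL : Fin m → ℝ}
    (hxL : xL ∈ XLset A B) :
    ∃ j, xL ∈ XReg B j ∧ ∀ x ∈ XReg B j, purePay A x j ≤ purePay A xL j := by
  obtain ⟨j, hj, hxL, hval⟩ := hxL
  refine ⟨j, hxL, fun x hx => ?_⟩
  rw [← minE_eq_purePay (hE j), ← minE_eq_purePay (hE j), hval]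
  exact minE_le_alphaL hj hx

lemma mem_XLset_iff_of_dominant [NeZero m] {j : Fin n}
    (hdom : ∀ x ∈ Simp m, ∀ k ≠ j, purePay B x k < purePay B x j) {x : Fin m → ℝ} :
    x ∈ XLset A B ↔ x ∈ Simp m ∧ ∀ x' ∈ Simp m, purePay A x' j ≤ purePay A x j := by
  have hreg : ∀ {k x}, x ∈ XReg B k → k = j := fun {k x} hx => by
    by_contra hk
    exact (hx.2 j).not_gt (hdom x hx.1 k hk)
  have hm : (m : ℝ) ≠ 0 := Nat.cast_ne_zero.2 (NeZero.ne m)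
  have hunif : (fun _ => (m : ℝ)⁻¹) ∈ Simp m :=
    ⟨fun _ => by positivity, by simp [hm]⟩
  have hE : Ecols B j = {j} := Ecols_eq_singleton fun k hk => by
    by_contra! hcol
    exact (hdom _ hunif k hk).ne (congrArg (dotProduct _) (funext hcol))
  have hXReg : ∀ x ∈ Simp m, x ∈ XReg B j := fun x hx => ⟨hx, fun k => by
    by_cases hk : k = j
    · rw [hk]
    · exact (hdom x hx k hk).le⟩
  have hjD : j ∈ Dset B := ⟨_, hXReg _ hunif, fun _ => by positivity⟩
  constructor
  · rintro ⟨k, -, hx, hval⟩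
    obtain rfl := hreg hx
    refine ⟨hx.1, fun x' hx' => ?_⟩
    rw [← minE_eq_purePay hE, ← minE_eq_purePay hE, hval]
    exact minE_le_alphaL hjD (hXReg x' hx')
  · rintro ⟨hx, hmax⟩
    refine ⟨j, hjD, hXReg x hx, (IsGreatest.csSup_eq ?_).symm⟩
    refine ⟨⟨j, hjD, x, hXReg x hx, rfl⟩, ?_⟩
    rintro _ ⟨k, -, x', hx', rfl⟩
    obtain rfl := hreg hx'
    rw [minE_eq_purePay hE, minE_eq_purePay hE]
    exact hmax x' hx'.1

end General

section FinTwo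

variable {i i' : Fin 2}

lemma Fin.two_eq_or_eq (hi : i' ≠ i) (k : Fin 2) : k = i ∨ k = i' := by
  omega

lemma Fin.forall_two_le {f : Fin 2 → ℝ} (hi : i' ≠ i) (h : f i' ≤ f i) :
    ∀ k, f k ≤ f i := by
  intro k
  rcases Fin.two_eq_or_eq hi k with rfl | rfl
  exacts [le_rfl, h]

lemma Fin.sum_two_of_ne (hi : i' ≠ i) (f : Fin 2 → ℝ) : ∑ k, f k = f i + f i' := by
  rw [← sum_pair hi.symm]
  congr
  ext k
  simpa using Fin.two_eq_or_eq hi k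

lemma add_eq_one_of_mem_Simp (hi : i' ≠ i) {x : Fin 2 → ℝ} (hx : x ∈ Simp 2) :
    x i + x i' = 1 := by
  rw [← Fin.sum_two_of_ne hi]; exact hx.2

lemma dotProduct_sub_dotProduct_of_mem_Simp (hi : i' ≠ i) {x z : Fin 2 → ℝ}
    (hx : x ∈ Simp 2) (hz : z ∈ Simp 2) (v : Fin 2 → ℝ) :
    x ⬝ᵥ v - z ⬝ᵥ v = (x i' - z i') * (v i' - v i) := by
  simp only [dotProduct, Fin.sum_two_of_ne hi]
  linear_combination v i * add_eq_one_of_mem_Simp hi hx - v i * add_eq_one_of_mem_Simp hi hz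

lemma eq_of_mem_Simp_of_apply_eq (hi : i' ≠ i) {x z : Fin 2 → ℝ} (hx : x ∈ Simp 2)
    (hz : z ∈ Simp 2) (h : x i' = z i') : x = z := by
  funext k
  rcases Fin.two_eq_or_eq hi k with rfl | rfl
  · linarith [add_eq_one_of_mem_Simp hi hx, add_eq_one_of_mem_Simp hi hz]
  · exact h

lemma eq_single_of_le_dotProduct (hi : i' ≠ i) {x v : Fin 2 → ℝ} (hx : x ∈ Simp 2)
    (hv : v i' < v i) (hle : v i ≤ x ⬝ᵥ v) : x = Pi.single i 1 := by
  have hdiff := dotProduct_sub_dotProduct_of_mem_Simp hi hx (single_mem_stdSimplex ℝ i) v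
  rw [single_dotProduct, one_mul, Pi.single_eq_of_ne hi, sub_zero] at hdiff
  refine eq_of_mem_Simp_of_apply_eq hi hx (single_mem_stdSimplex ℝ i) ?_
  rw [Pi.single_eq_of_ne hi]
  nlinarith [hx.1 i']

lemma exists_mem_Simp_dotProduct_eq {v w : Fin 2 → ℝ} (h : w i < v i) (h' : v i' < w i') :
    ∃ x ∈ Simp 2, x ⬝ᵥ v = x ⬝ᵥ w := by
  set s := (v i - w i) / ((v i - w i) + (w i' - v i')) with hs
  have hpos : 0 < (v i - w i) + (w i' - v i') := by linarith
  have hs0 : 0 ≤ s := div_nonneg (by linarith) hpos.le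
  have hs1 : s ≤ 1 := (div_le_one hpos).2 (by linarith)
  refine ⟨(1 - s) • Pi.single i 1 + s • Pi.single i' 1,
    convex_stdSimplex ℝ (Fin 2) (single_mem_stdSimplex ℝ i) (single_mem_stdSimplex ℝ i')
      (by linarith) hs0 (by ring), ?_⟩
  simp only [add_dotProduct, smul_dotProduct, single_dotProduct, one_mul, smul_eq_mul]
  rw [hs]
  field_simp
  ring

lemma NondegFor.apply_ne {m : ℕ} {B : Matrix (Fin m) (Fin 2) ℝ} (hnd : NondegFor B) (r : Fin m)
    {j j' : Fin 2} (hj : j' ≠ j) : B r j' ≠ B r j := by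
  intro hrow
  have hBR : BRII B (Pi.single r 1) = Set.univ := by
    refine Set.eq_univ_of_forall fun k l => ?_
    simp only [purePay_single]
    rcases Fin.two_eq_or_eq hj k with rfl | rfl <;>
      rcases Fin.two_eq_or_eq hj l with rfl | rfl <;> simp [hrow]
  have hsupp : {k | (Pi.single r 1 : Fin m → ℝ) k ≠ 0} = {r} := by
    ext k
    by_cases hk : k = r <;> simp [Pi.single_apply, hk]
  have := hnd _ (single_mem_stdSimplex ℝ r)
  rw [hBR, hsupp, Set.ncard_univ, Set.ncard_singleton] at this
  simp at this

end FinTwo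

section TwoByTwo

variable {A B : Matrix (Fin 2) (Fin 2) ℝ} {i i' j j' : Fin 2} {xL : Fin 2 → ℝ}

lemma exists_lt_of_mem_XReg (hnd : NondegFor B) (hj : j' ≠ j) (hx : xL ∈ XReg B j) :
    ∃ i, B i j' < B i j := by
  by_contra! h
  exact (hx.2 j').not_gt (dotProduct_lt_dotProduct_of_mem_Simp hx.1 fun r =>
    (h r).lt_of_ne (hnd.apply_ne r hj).symm)

lemma mem_NEX_of_isMax_at_single (hi : i' ≠ i) (hj : j' ≠ j) (hB : B i j' < B i j)
    (hA : A i' j < A i j) (hx : xL ∈ XReg B j)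
    (hopt : ∀ x ∈ XReg B j, purePay A x j ≤ purePay A xL j) : xL ∈ NEX A B := by
  have hsingle : Pi.single i 1 ∈ XReg B j := ⟨single_mem_stdSimplex ℝ i,
    Fin.forall_two_le (f := purePay B (Pi.single i 1)) hj (by simpa [purePay_single] using hB.le)⟩
  have hle := hopt _ hsingle
  rw [purePay_single] at hle
  obtain rfl : xL = Pi.single i 1 := eq_single_of_le_dotProduct (v := fun r => A r j) hi hx.1 hA hle
  exact ⟨_, isNE_single (Fin.forall_two_le hi hA.le) (Fin.forall_two_le hj hB.le)⟩

lemma mem_NEX_of_isMax_mixed (hi : i' ≠ i) (hj : j' ≠ j)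
    (hBi : B i j' < B i j) (hBi' : B i' j < B i' j') (hAj : A i j < A i' j)
    (hAj' : A i' j' < A i j') (hx : xL ∈ XReg B j)
    (hopt : ∀ x ∈ XReg B j, purePay A x j ≤ purePay A xL j) : xL ∈ NEX A B := by
  obtain ⟨z, hz, hzB⟩ := exists_mem_Simp_dotProduct_eq (v := fun r => B r j)
    (w := fun r => B r j') hBi hBi'
  obtain ⟨y, hy, hyA⟩ := exists_mem_Simp_dotProduct_eq (v := A i') (w := A i) hAj hAj'
  have hzreg : z ∈ XReg B j := ⟨hz, Fin.forall_two_le (f := purePay B z) hj hzB.symm.le⟩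
  have hB := dotProduct_sub_dotProduct_of_mem_Simp hi hx.1 hz fun r => B r j
  have hB' := dotProduct_sub_dotProduct_of_mem_Simp hi hx.1 hz fun r => B r j'
  have hA := dotProduct_sub_dotProduct_of_mem_Simp hi hx.1 hz fun r => A r j
  have hxreg : purePay B xL j' ≤ purePay B xL j := hx.2 j'
  have hzopt : purePay A z j ≤ purePay A xL j := hopt z hzreg
  -- `X(j)` lies on the `e_i` side of `z`, while `α(·, e_j)` increases towards `e_{i'}`.
  obtain rfl : xL = z := eq_of_mem_Simp_of_apply_eq hi hx.1 hz (by
    simp only [purePay, vecMul] at hzB hxreg hzopt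
    apply le_antisymm <;> nlinarith)
  refine ⟨y, isNE_of_indifferent hx.1 hy (a := (A *ᵥ y) i) (b := purePay B xL j)
    (fun r => ?_) (fun l => ?_)⟩
  · rcases Fin.two_eq_or_eq hi r with rfl | rfl
    exacts [rfl, by simp only [mulVec, dotProduct_comm _ y]; exact hyA]
  · rcases Fin.two_eq_or_eq hj l with rfl | rfl
    exacts [rfl, hzB.symm]

lemma XLset_subset_NEX_of_not_dominant (hndI : NondegFor B) (hndII : NondegFor Aᵀ)
    (hno : ∀ i i' : Fin 2, i' ≠ i → ∃ k, A i k ≤ A i' k) : XLset A B ⊆ NEX A B := by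
  have hE : ∀ j, Ecols B j = {j} := fun j =>
    Ecols_eq_singleton fun k hk => ⟨0, hndI.apply_ne 0 hk⟩
  intro xL hxL
  obtain ⟨j, hx, hopt⟩ := exists_forall_purePay_le_of_mem_XLset hE hxL
  obtain ⟨j', hj⟩ := exists_ne j
  obtain ⟨i, hBi⟩ := exists_lt_of_mem_XReg hndI hj hx
  obtain ⟨i', hi⟩ := exists_ne i
  have hAne : A i' j ≠ A i j := hndII.apply_ne j hi
  rcases hAne.lt_or_gt with hAj | hAj
  · exact mem_NEX_of_isMax_at_single hi hj hBi hAj hx hopt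
  have hAj' : A i' j' < A i j' := by
    obtain ⟨k, hk⟩ := hno i' i hi.symm
    rcases Fin.two_eq_or_eq hj k with rfl | rfl
    · exact absurd hk hAj.not_ge
    · exact hk.lt_of_ne (hndII.apply_ne k hi)
  rcases (hndI.apply_ne i' hj).lt_or_gt with hBi' | hBi'
  · exact mem_NEX_of_isMax_at_single hi.symm hj hBi' hAj hx hopt
  · exact mem_NEX_of_isMax_mixed hi hj hBi hBi' hAj hAj' hx hopt

lemma NEY_eq_of_dominant (hi : i' ≠ i) (hj : j' ≠ j) (hA : ∀ k, A i' k < A i k)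
    (hB : B i j' < B i j) : NEY A B = {Pi.single j 1} := by
  ext y
  refine ⟨fun ⟨x, hNE⟩ => ?_, fun hy => ?_⟩
  · obtain ⟨hx, hy, hI, hII⟩ := isNE_iff_pure.1 hNE
    have hAy : (A *ᵥ y) i' < (A *ᵥ y) i := by
      simp only [mulVec, dotProduct_comm _ y]
      exact dotProduct_lt_dotProduct_of_mem_Simp hy hA
    obtain rfl : x = Pi.single i 1 := eq_single_of_le_dotProduct hi hx hAy (hI i)
    have hBy := hII j
    rw [purePay_single, pay, single_dotProduct, one_mul, mulVec, dotProduct_comm] at hBy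
    exact eq_single_of_le_dotProduct (v := B i) hj hy hB hBy
  · rw [hy]
    exact ⟨_, isNE_single (Fin.forall_two_le hi (hA j).le) (Fin.forall_two_le hj hB.le)⟩

lemma XLset_transpose_eq_NEY_of_dominant (hndI : NondegFor B) (hi : i' ≠ i)
    (hA : ∀ k, A i' k < A i k) : XLset Bᵀ Aᵀ = NEY A B := by
  obtain ⟨j, j', hj, hB⟩ : ∃ j j' : Fin 2, j' ≠ j ∧ B i j' < B i j := by
    rcases (hndI.apply_ne i one_ne_zero).lt_or_gt with h | h
    exacts [⟨0, 1, one_ne_zero, h⟩, ⟨1, 0, zero_ne_one, h⟩]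
  have hdom : ∀ y ∈ Simp 2, ∀ k ≠ i, purePay Aᵀ y k < purePay Aᵀ y i := by
    intro y hy k hk
    rcases Fin.two_eq_or_eq hi k with rfl | rfl
    exacts [absurd rfl hk, dotProduct_lt_dotProduct_of_mem_Simp hy hA]
  rw [NEY_eq_of_dominant hi hj hA hB]
  ext y
  rw [mem_XLset_iff_of_dominant hdom, Set.mem_singleton_iff]
  refine ⟨fun ⟨hy, hmax⟩ => ?_, fun hy => ?_⟩
  · have hle := hmax _ (single_mem_stdSimplex ℝ j)
    rw [purePay_single] at hle
    exact eq_single_of_le_dotProduct (v := B i) hj hy hB hle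
  · rw [hy]
    refine ⟨single_mem_stdSimplex ℝ j, fun y' hy' => ?_⟩
    rw [purePay_single]
    exact dotProduct_le_of_mem_Simp hy' (Fin.forall_two_le hj hB.le)

theorem XLset_subset_NEX_or_XLset_transpose_eq_NEY (hndI : NondegFor B) (hndII : NondegFor Aᵀ) :
    XLset A B ⊆ NEX A B ∨ XLset Bᵀ Aᵀ = NEY A B := by
  by_cases hdom : ∃ i i' : Fin 2, i' ≠ i ∧ ∀ k, A i' k < A i k
  · obtain ⟨i, i', hi, hA⟩ := hdom
    exact Or.inr (XLset_transpose_eq_NEY_of_dominant hndI hi hA)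
  · simp only [not_exists, not_and, not_forall, not_lt] at hdom
    exact Or.inl (XLset_subset_NEX_of_not_dominant hndI hndII hdom)

end TwoByTwo

/-- in a 2×2 bimatrix game that is non-degenerate for both players,
exactly one of the following holds:
(i) some `x^L ∈ X^L` is not a Nash equilibrium strategy and `Y^L = NE(Y)`;
(ii) some `y^L ∈ Y^L` is not a Nash equilibrium strategy and `X^L = NE(X)`;
(iii) `X^L ⊆ NE(X)` and `Y^L ⊆ NE(Y)`.
(Player II's leader quantities are those of the game with matrices `(Bᵀ, Aᵀ)`.) -/
theorem stmt16 (A B : Matrix (Fin 2) (Fin 2) ℝ)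
    (hndI : NondegFor B) (hndII : NondegFor Aᵀ) :
    (((∃ xL ∈ XLset A B, xL ∉ NEX A B) ∧ XLset Bᵀ Aᵀ = NEY A B) ∧
      ¬ ((∃ yL ∈ XLset Bᵀ Aᵀ, yL ∉ NEY A B) ∧ XLset A B = NEX A B) ∧
      ¬ (XLset A B ⊆ NEX A B ∧ XLset Bᵀ Aᵀ ⊆ NEY A B)) ∨
    (¬ ((∃ xL ∈ XLset A B, xL ∉ NEX A B) ∧ XLset Bᵀ Aᵀ = NEY A B) ∧
      ((∃ yL ∈ XLset Bᵀ Aᵀ, yL ∉ NEY A B) ∧ XLset A B = NEX A B) ∧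
      ¬ (XLset A B ⊆ NEX A B ∧ XLset Bᵀ Aᵀ ⊆ NEY A B)) ∨
    (¬ ((∃ xL ∈ XLset A B, xL ∉ NEX A B) ∧ XLset Bᵀ Aᵀ = NEY A B) ∧
      ¬ ((∃ yL ∈ XLset Bᵀ Aᵀ, yL ∉ NEY A B) ∧ XLset A B = NEX A B) ∧
      (XLset A B ⊆ NEX A B ∧ XLset Bᵀ Aᵀ ⊆ NEY A B)) := by
  have hI := XLset_subset_NEX_or_XLset_transpose_eq_NEY hndI hndII
  have hII := XLset_subset_NEX_or_XLset_transpose_eq_NEY hndII (B.transpose_transpose.symm ▸ hndI)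
  rw [transpose_transpose, transpose_transpose, NEX_transpose, NEY_transpose] at hII
  have hYL : XLset Bᵀ Aᵀ = NEY A B → XLset Bᵀ Aᵀ ⊆ NEY A B := Eq.subset
  have hXL : XLset A B = NEX A B → XLset A B ⊆ NEX A B := Eq.subset
  simp only [← Set.not_subset]
  tauto
end
end

section
/- Commitment value of the Traveler's Dilemma: In the Traveler's Dilemma, the highest leader payoff equals α^H = 295/3 (= 98⅓). Moreover, the mixed strategy x^L placing probability 1/3 on each of the pure strategies 97, 99 and 100 satisfies: the pure strategy 99 of player II is a best reply to x^L (99 ∈ BR_II(x^L)), the leader's payoff is α(x^L, e_{99}) = 295/3, and the follower's payoff is β(x^L, e_{99}) = 295/3. -/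
open Matrix

noncomputable section

/-- Traveler's Dilemma payoff of the row player choosing `i` against `j`,
for `i, j ∈ {2,…,100}`. -/
def trdPay (i j : ℕ) : ℝ :=
  if i < j then (i : ℝ) + 2 else if i = j then (i : ℝ) else (j : ℝ) - 2

/-- Player I's payoff matrix in the Traveler's Dilemma; strategy `i : Fin 99`
represents the claim `i + 2 ∈ {2,…,100}`. -/
def TrA : Matrix (Fin 99) (Fin 99) ℝ :=
  Matrix.of fun i j => trdPay (i.val + 2) (j.val + 2)

/-- Player II's payoff matrix in the Traveler's Dilemma. -/
def TrB : Matrix (Fin 99) (Fin 99) ℝ :=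
  Matrix.of fun i j => trdPay (j.val + 2) (i.val + 2)

/-- The leader's commitment optimal strategy in the Traveler's Dilemma: probability
`1/3` on each of the claims `97`, `99` and `100` (indices `95`, `97`, `98`). -/
def trdXL : Fin 99 → ℝ :=
  fun i => if i.val = 95 ∨ i.val = 97 ∨ i.val = 98 then 1 / 3 else 0

/-! The upper bound `α(x, e_j) ≤ 295/3` on `X(j)` is certified column by column by weak LP
duality: a nonnegative combination of the follower's best-reply constraints
`β(x, e_k) ≤ β(x, e_j)` that dominates column `j` of `A` row by row. For claims `j ≤ 97` no
constraint is needed since column `j` of `A` is bounded by `j + 1 ≤ 98`; for `j = 98, 99` the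
constraints against `j - 1` and `j - 2` with weights `2/3, 1/3` suffice, and for `j = 100` those
against `97, 98, 99` with weights `1/3, 5/6, 2`. The bound is attained by `x^L` against `99`. -/

section Duality

variable {m n : ℕ} (A B : Matrix (Fin m) (Fin n) ℝ)

lemma purePay_eq_sum (x : Fin m → ℝ) (j : Fin n) : purePay A x j = ∑ i, x i * A i j := by
  simp [purePay, Matrix.vecMul, dotProduct]

theorem purePay_le_of_dual_certificate {j : Fin n} {x : Fin m → ℝ} (hx : x ∈ XReg B j)
    {r : ℕ} (w : Fin r → ℝ) (col : Fin r → Fin n) (c : ℝ) (hw : ∀ t, 0 ≤ w t)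
    (hcert : ∀ i, A i j ≤ c + ∑ t, w t * (B i (col t) - B i j)) :
    purePay A x j ≤ c := by
  obtain ⟨⟨hx0, hx1⟩, hbr⟩ := hx
  have hslack : ∀ t, w t * (purePay B x (col t) - purePay B x j) ≤ 0 := fun t =>
    mul_nonpos_of_nonneg_of_nonpos (hw t) (sub_nonpos.mpr (hbr (col t)))
  calc purePay A x j
      ≤ ∑ i, x i * (c + ∑ t, w t * (B i (col t) - B i j)) := by
        rw [purePay_eq_sum]
        exact Finset.sum_le_sum fun i _ => mul_le_mul_of_nonneg_left (hcert i) (hx0 i)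
    _ = c + ∑ t, w t * (purePay B x (col t) - purePay B x j) := by
        simp only [purePay_eq_sum, mul_add, Finset.sum_add_distrib, ← Finset.sum_mul, hx1,
          one_mul, Finset.mul_sum, ← Finset.sum_sub_distrib]
        rw [Finset.sum_comm]
        exact congrArg _ (Finset.sum_congr rfl fun t _ => Finset.sum_congr rfl fun i _ => by ring)
    _ ≤ c := add_le_of_nonpos_right (Finset.sum_nonpos fun t _ => hslack t)

theorem alphaH_eq_of_le_of_mem {c : ℝ} (hle : ∀ j, ∀ x ∈ XReg B j, purePay A x j ≤ c)
    {j : Fin n} {x : Fin m → ℝ} (hx : x ∈ XReg B j) (hc : purePay A x j = c) :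
    alphaH A B = c := by
  have hub : c ∈ upperBounds {v | ∃ j, ∃ x ∈ XReg B j, v = purePay A x j} := by
    rintro v ⟨j, x, hx, rfl⟩
    exact hle j x hx
  have hmem : c ∈ {v | ∃ j, ∃ x ∈ XReg B j, v = purePay A x j} := ⟨j, x, hx, hc.symm⟩
  exact IsGreatest.csSup_eq ⟨hmem, hub⟩

end Duality

section TravelersDilemma

lemma trdPay_of_lt {a b : ℕ} (h : a < b) : trdPay a b = a + 2 := if_pos h

lemma trdPay_of_gt {a b : ℕ} (h : b < a) : trdPay a b = b - 2 := by
  rw [trdPay, if_neg h.not_gt, if_neg h.ne']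

lemma trdPay_le_add_one (a b : ℕ) : trdPay a b ≤ b + 1 := by
  rcases lt_trichotomy a b with h | rfl | h
  · rw [trdPay_of_lt h]
    exact_mod_cast (by omega : a + 2 ≤ b + 1)
  · simp [trdPay]
  · rw [trdPay_of_gt h]
    linarith

lemma trdPay_sub_trdPay_of_lt {a k b : ℕ} (hk : a < k) (hb : a < b) :
    trdPay k a - trdPay b a = 0 := by
  rw [trdPay_of_gt hk, trdPay_of_gt hb, sub_self]

lemma trdPay_le_of_le_96 {a b : ℕ} (ha : a ≤ 96) (hb : a < b) : trdPay a b ≤ 98 := by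
  rw [trdPay_of_lt hb]
  exact_mod_cast (by omega : a + 2 ≤ 98)

lemma trdPay_dual_certificate_98 {a : ℕ} (ha : a ≤ 100) :
    trdPay a 98 ≤ 295 / 3 + (2 / 3 * (trdPay 97 a - trdPay 98 a)
      + 1 / 3 * (trdPay 96 a - trdPay 98 a)) := by
  rcases le_or_gt a 95 with h | h
  · rw [trdPay_sub_trdPay_of_lt (by omega) (by omega),
      trdPay_sub_trdPay_of_lt (by omega) (by omega)]
    linarith [trdPay_le_of_le_96 (by omega : a ≤ 96) (by omega : a < 98)]
  · interval_cases a <;> norm_num [trdPay]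

lemma trdPay_dual_certificate_99 {a : ℕ} (ha : a ≤ 100) :
    trdPay a 99 ≤ 295 / 3 + (2 / 3 * (trdPay 98 a - trdPay 99 a)
      + 1 / 3 * (trdPay 97 a - trdPay 99 a)) := by
  rcases le_or_gt a 96 with h | h
  · rw [trdPay_sub_trdPay_of_lt (by omega) (by omega),
      trdPay_sub_trdPay_of_lt (by omega) (by omega)]
    linarith [trdPay_le_of_le_96 h (by omega : a < 99)]
  · interval_cases a <;> norm_num [trdPay]

lemma trdPay_dual_certificate_100 {a : ℕ} (ha : a ≤ 100) :
    trdPay a 100 ≤ 295 / 3 + (1 / 3 * (trdPay 97 a - trdPay 100 a)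
      + 5 / 6 * (trdPay 98 a - trdPay 100 a) + 2 * (trdPay 99 a - trdPay 100 a)) := by
  rcases le_or_gt a 96 with h | h
  · rw [trdPay_sub_trdPay_of_lt (by omega) (by omega),
      trdPay_sub_trdPay_of_lt (by omega) (by omega),
      trdPay_sub_trdPay_of_lt (by omega) (by omega)]
    linarith [trdPay_le_of_le_96 h (by omega : a < 100)]
  · interval_cases a <;> norm_num [trdPay]

lemma trdPay_avg_97_99_100_le {a : ℕ} (ha : a ≤ 100) :
    (trdPay a 97 + trdPay a 99 + trdPay a 100) / 3 ≤ 295 / 3 := by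
  rcases le_or_gt a 96 with h | h
  · linarith [trdPay_le_of_le_96 h (by omega : a < 97), trdPay_le_of_le_96 h (by omega : a < 99),
      trdPay_le_of_le_96 h (by omega : a < 100)]
  · interval_cases a <;> norm_num [trdPay]

theorem TrA_purePay_le_of_mem_XReg {j : Fin 99} {x : Fin 99 → ℝ} (hx : x ∈ XReg TrB j) :
    purePay TrA x j ≤ 295 / 3 := by
  have hi : ∀ i : Fin 99, (i : ℕ) + 2 ≤ 100 := fun i => by omega
  obtain hj | hj | hj | hj : (j : ℕ) ≤ 95 ∨ (j : ℕ) = 96 ∨ (j : ℕ) = 97 ∨ (j : ℕ) = 98 := by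
    omega
  · refine purePay_le_of_dual_certificate TrA TrB hx ![] ![] _ (fun t => t.elim0) fun i => ?_
    have hj' : ((j + 2 : ℕ) : ℝ) + 1 ≤ 295 / 3 := by
      have : ((j + 2 : ℕ) : ℝ) ≤ 97 := by exact_mod_cast (by omega : (j : ℕ) + 2 ≤ 97)
      linarith
    simpa [TrA] using (trdPay_le_add_one (i + 2) (j + 2)).trans hj'
  · obtain rfl : j = ⟨96, by norm_num⟩ := Fin.ext hj
    refine purePay_le_of_dual_certificate TrA TrB hx ![2 / 3, 1 / 3]
      ![⟨95, by norm_num⟩, ⟨94, by norm_num⟩] _ (fun t => by fin_cases t <;> norm_num)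
      fun i => ?_
    simpa [Fin.sum_univ_two, TrA, TrB] using trdPay_dual_certificate_98 (hi i)
  · obtain rfl : j = ⟨97, by norm_num⟩ := Fin.ext hj
    refine purePay_le_of_dual_certificate TrA TrB hx ![2 / 3, 1 / 3]
      ![⟨96, by norm_num⟩, ⟨95, by norm_num⟩] _ (fun t => by fin_cases t <;> norm_num)
      fun i => ?_
    simpa [Fin.sum_univ_two, TrA, TrB] using trdPay_dual_certificate_99 (hi i)
  · obtain rfl : j = ⟨98, by norm_num⟩ := Fin.ext hj
    refine purePay_le_of_dual_certificate TrA TrB hx ![1 / 3, 5 / 6, 2]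
      ![⟨95, by norm_num⟩, ⟨96, by norm_num⟩, ⟨97, by norm_num⟩] _
      (fun t => by fin_cases t <;> norm_num) fun i => ?_
    simpa [Fin.sum_univ_three, TrA, TrB] using trdPay_dual_certificate_100 (hi i)

lemma sum_trdXL_mul (f : Fin 99 → ℝ) :
    ∑ i, trdXL i * f i = (f ⟨95, by norm_num⟩ + f ⟨97, by norm_num⟩ + f ⟨98, by norm_num⟩) / 3 := by
  have hsupp : (Finset.univ.filter fun i : Fin 99 => i.val = 95 ∨ i.val = 97 ∨ i.val = 98)
      = {⟨95, by norm_num⟩, ⟨97, by norm_num⟩, ⟨98, by norm_num⟩} := by decide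
  simp only [trdXL, ite_mul, zero_mul, Finset.sum_ite, Finset.sum_const_zero, add_zero, hsupp]
  rw [Finset.sum_insert (by decide), Finset.sum_pair (by decide)]
  ring

lemma trdXL_mem_Simp : trdXL ∈ Simp 99 := by
  refine ⟨fun i => ?_, ?_⟩
  · unfold trdXL
    split_ifs <;> norm_num
  · simpa using (sum_trdXL_mul 1).trans (by norm_num)

lemma purePay_trdXL (M : Matrix (Fin 99) (Fin 99) ℝ) (k : Fin 99) :
    purePay M trdXL k
      = (M ⟨95, by norm_num⟩ k + M ⟨97, by norm_num⟩ k + M ⟨98, by norm_num⟩ k) / 3 := by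
  rw [purePay_eq_sum, sum_trdXL_mul]

lemma purePay_TrA_trdXL : purePay TrA trdXL ⟨97, by norm_num⟩ = 295 / 3 := by
  rw [purePay_trdXL]
  norm_num [TrA, trdPay]

lemma purePay_TrB_trdXL : purePay TrB trdXL ⟨97, by norm_num⟩ = 295 / 3 := by
  rw [purePay_trdXL]
  norm_num [TrB, trdPay]

lemma mem_BRII_TrB_trdXL : (⟨97, by norm_num⟩ : Fin 99) ∈ BRII TrB trdXL := fun k => by
  rw [purePay_TrB_trdXL, purePay_trdXL]
  simpa [TrB] using trdPay_avg_97_99_100_le (a := k + 2) (by omega)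

end TravelersDilemma

/-- in the Traveler's Dilemma, the highest leader payoff is
`α^H = 295/3 = 98⅓`; moreover, for the mixed strategy `x^L` putting weight `1/3` on
each of `97`, `99`, `100`, the claim `99` (index `97`) is a pure best reply of the
follower, and both the leader's and the follower's payoffs equal `295/3`. -/
theorem stmt18 :
    alphaH TrA TrB = 295 / 3 ∧
    trdXL ∈ Simp 99 ∧
    (⟨97, by norm_num⟩ : Fin 99) ∈ BRII TrB trdXL ∧
    purePay TrA trdXL ⟨97, by norm_num⟩ = 295 / 3 ∧
    purePay TrB trdXL ⟨97, by norm_num⟩ = 295 / 3 :=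
  ⟨alphaH_eq_of_le_of_mem TrA TrB (fun _ _ => TrA_purePay_le_of_mem_XReg)
      ⟨trdXL_mem_Simp, mem_BRII_TrB_trdXL⟩ purePay_TrA_trdXL,
    trdXL_mem_Simp, mem_BRII_TrB_trdXL, purePay_TrA_trdXL, purePay_TrB_trdXL⟩
end
end
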